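/- arXiv:1508.07222 — 2 statements merged into one kernel-verified Lean document; each statement's English description precedes it below -/
import Mathlib

section
/- Let m, n ≥ 0 be integers with p = 2m+n ≥ 2, and let G be a finite simple graph such that every (m,n)-colored mixed graph with underlying graph G admits a homomorphism to some (m,n)-colored mixed graph on at most k vertices, where k ≥ 4. Then the acyclic chromatic number of G satisfies χ_a(G) ≤ k² + k^{2 + ⌈log_p log_p k⌉}. -/
/-- The possible kinds of links from a vertex `u` to a vertex `v` in an
`(m,n)`-colored mixed graph: an arc `u → v` of one of `m` colors, an arc
`v → u` of one of `m` colors, or an (unoriented) edge of one of `n` colors. -/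
inductive Link (m n : ℕ) : Type where
  | arcOut : Fin m → Link m n
  | arcIn : Fin m → Link m n
  | edge : Fin n → Link m n

/-- The link as seen from the other endpoint. -/
def Link.flip {m n : ℕ} : Link m n → Link m n
  | .arcOut c => .arcIn c
  | .arcIn c => .arcOut c
  | .edge c => .edge c

/-- An `(m,n)`-colored mixed graph on vertex type `V`: between any two distinct
vertices there is at most one link (a colored arc in either direction or a
colored edge), and there are no loops. -/
structure CMGraph (m n : ℕ) (V : Type) where
  link : V → V → Option (Link m n)
  symm : ∀ u v, link v u = (link u v).map Link.flip
  loopless : ∀ v, link v v = none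

/-- The underlying simple graph of an `(m,n)`-colored mixed graph. -/
def CMGraph.underlying {m n : ℕ} {V : Type} (G : CMGraph m n V) : SimpleGraph V where
  Adj u v := (G.link u v).isSome
  symm := by
    constructor
    intro u v h
    rw [G.symm u v]
    rcases hx : G.link u v with _ | l
    · rw [hx] at h; simp at h
    · simp
  loopless := by
    constructor
    intro v h
    rw [G.loopless v] at h
    simp at h

/-- A homomorphism of `(m,n)`-colored mixed graphs: arcs map to arcs of the same
color and direction, edges map to edges of the same color. -/
def IsCMHom {m n : ℕ} {V W : Type} (G : CMGraph m n V) (H : CMGraph m n W)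
    (f : V → W) : Prop :=
  ∀ u v l, G.link u v = some l → H.link (f u) (f v) = some l

/-- `G` admits a homomorphism to some `(m,n)`-colored mixed graph on at most `k`
vertices, i.e. `χ_{(m,n)}(G) ≤ k`. -/
def CMChromAtMost {m n : ℕ} {V : Type} (G : CMGraph m n V) (k : ℕ) : Prop :=
  ∃ (W : Type) (inst : Fintype W) (H : CMGraph m n W) (f : V → W),
    @Fintype.card W inst ≤ k ∧ IsCMHom G H f

/-- Every `(m,n)`-colored mixed graph admitting a homomorphism from `G` has at
least `k` vertices, i.e. `χ_{(m,n)}(G) ≥ k`. -/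
def CMChromAtLeast {m n : ℕ} {V : Type} (G : CMGraph m n V) (k : ℕ) : Prop :=
  ∀ (W : Type) (inst : Fintype W) (H : CMGraph m n W) (f : V → W),
    IsCMHom G H f → k ≤ @Fintype.card W inst

/-- The acyclic chromatic number of `G` is at most `k`: there is a proper
`k`-coloring in which the union of any two color classes induces a forest. -/
def AcycChromAtMost {V : Type} (G : SimpleGraph V) (k : ℕ) : Prop :=
  ∃ c : V → Fin k, (∀ u v, G.Adj u v → c u ≠ c v) ∧
    ∀ i j : Fin k, (G.induce {v | c v = i ∨ c v = j}).IsAcyclic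

/-- The edge set of `G` can be decomposed into `r` forests. -/
def ArbAtMost {V : Type} (G : SimpleGraph V) (r : ℕ) : Prop :=
  ∃ F : Fin r → SimpleGraph V,
    (∀ i, F i ≤ G) ∧
    (∀ i, (F i).IsAcyclic) ∧
    (∀ u v, G.Adj u v → ∃ i, (F i).Adj u v) ∧
    (∀ i j, i ≠ j → ∀ u v, ¬ ((F i).Adj u v ∧ (F j).Adj u v))

/-- Every vertex of `G` has degree at most `d`. -/
def MaxDegAtMost {V : Type} (G : SimpleGraph V) (d : ℕ) : Prop :=
  ∀ v, (G.neighborSet v).ncard ≤ d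

/-- `G` is `d`-degenerate: every nonempty (induced) subgraph has a vertex of
degree at most `d` in it. -/
def DegenAtMost {V : Type} (G : SimpleGraph V) (d : ℕ) : Prop :=
  ∀ s : Set V, s.Nonempty → ∃ v ∈ s, (G.neighborSet v ∩ s).ncard ≤ d


/-- The acyclic chromatic number of `G`. -/
noncomputable def acycChrom {V : Type} (G : SimpleGraph V) : ℕ :=
  sInf {k | AcycChromAtMost G k}

/-!
Fix a ranking of the vertices. Orienting every edge of `G` upwards and labelling it freely by one
of the `p = 2m+n` kinds of links gives `p^|E(S)|` mixed graphs on a vertex set `S`; each maps to a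
target on `k` vertices, and the labelling is recovered from the target's links on increasing pairs
together with the map on `S`, so `p^|E(S)| ≤ p^(k(k-1)/2) k^|S|`. As `k² ≤ p^D` for
`D = p^R`, `R = 2 + ⌈log_p log_p k⌉`, every set of more than `k²` vertices contains a vertex of
degree at most `D` in it. Peeling such vertices gives a ranking in which all but the last `k²`
vertices have at most `D` higher neighbours. The last `k²` vertices get private colors; any other
vertex `v` gets the tuple `(φ_l v)_{l<R}`, where `φ_l` is a homomorphism to `k` vertices of the
mixed graph whose upward link from `x` to `y` is the `l`-th digit of an injective base-`p` code of
`y` among the higher neighbours of `x`. The higher neighbours of each vertex then have distinct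
colors, which forces every bicolored subgraph to be a forest.
-/

open Finset Function

namespace Link

variable {m n : ℕ}

theorem flip_involutive : Involutive (Link.flip (m := m) (n := n)) := by
  intro l; cases l <;> rfl

@[simp] theorem flip_flip (l : Link m n) : l.flip.flip = l := flip_involutive l

def equivSum : Link m n ≃ Fin m ⊕ Fin m ⊕ Fin n where
  toFun
    | .arcOut c => .inl c
    | .arcIn c => .inr (.inl c)
    | .edge c => .inr (.inr c)
  invFun
    | .inl c => .arcOut c
    | .inr (.inl c) => .arcIn c
    | .inr (.inr c) => .edge c
  left_inv l := by cases l <;> rfl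
  right_inv x := by rcases x with c | c | c <;> rfl

instance : Fintype (Link m n) := Fintype.ofEquiv _ equivSum.symm

theorem card_eq : Fintype.card (Link m n) = 2 * m + n := by
  rw [Fintype.card_congr equivSum]; simp; ring

end Link

namespace CMGraph

variable {m n : ℕ} {V W : Type}

def comap (H : CMGraph m n W) (g : V → W) : CMGraph m n V where
  link u v := H.link (g u) (g v)
  symm _ _ := H.symm _ _
  loopless _ := H.loopless _

/-- Edges between vertices of equal rank are dropped, so that `symm` holds for any `r`. -/
def orient {β : Type*} [LinearOrder β] (G : SimpleGraph V) [DecidableRel G.Adj] (r : V → β)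
    (w : V → V → Link m n) :
    CMGraph m n V where
  link u v :=
    if G.Adj u v then
      if r u < r v then some (w u v) else if r v < r u then some (w v u).flip else none
    else none
  symm u v := by
    by_cases h : G.Adj u v
    · rcases lt_trichotomy (r u) (r v) with huv | huv | huv
      · simp [h, h.symm, huv, huv.not_gt]
      · simp [h, h.symm, huv]
      · simp [h, h.symm, huv, huv.not_gt]
    · simp [h, G.adj_comm v u]
  loopless v := by simp

section orient

variable {β : Type*} [LinearOrder β] {G : SimpleGraph V} [DecidableRel G.Adj] {r : V → β}
  {w : V → V → Link m n}

theorem orient_underlying (hr : Injective r) : (orient G r w).underlying = G := by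
  ext u v
  change (Option.isSome (ite _ _ _)) ↔ _
  by_cases h : G.Adj u v
  · rcases (hr.ne h.ne).lt_or_gt with huv | huv <;> simp [h, huv, huv.not_gt]
  · simp [h]

theorem orient_link_of_lt {u v : V} (h : G.Adj u v) (huv : r u < r v) :
    (orient G r w).link u v = some (w u v) := by
  simp [orient, h, huv]

end orient

def upperCode {β : Type} [LT β] (H : CMGraph m n β) (l₀ : Link m n) :
    {q : β × β // q.1 < q.2} → Link m n :=
  fun q => (H.link q.1.1 q.1.2).getD l₀

theorem eq_of_upperCode_eq {β : Type} [LinearOrder β] {H₁ H₂ : CMGraph m n β} {l₀ : Link m n}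
    (hcode : H₁.upperCode l₀ = H₂.upperCode l₀) {a b : β} {l₁ l₂ : Link m n}
    (h₁ : H₁.link a b = some l₁) (h₂ : H₂.link a b = some l₂) : l₁ = l₂ := by
  rcases lt_trichotomy a b with hab | rfl | hab
  · simpa [upperCode, h₁, h₂] using congrFun hcode ⟨(a, b), hab⟩
  · simp [H₁.loopless] at h₁
  · have := congrFun hcode ⟨(b, a), hab⟩
    simp only [upperCode, H₁.symm a b, H₂.symm a b, h₁, h₂, Option.map_some,
      Option.getD_some] at this
    exact Link.flip_involutive.injective this

end CMGraph

theorem IsCMHom.ne_of_adj {m n : ℕ} {V W : Type} {M : CMGraph m n V} {H : CMGraph m n W}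
    {f : V → W} (hf : IsCMHom M H f) {u v : V} (huv : M.underlying.Adj u v) : f u ≠ f v := by
  obtain ⟨l, hl⟩ := Option.isSome_iff_exists.mp huv
  intro heq
  simpa [heq, H.loopless] using hf u v l hl

theorem CMChromAtMost.exists_hom_fin {m n k : ℕ} {V : Type} {M : CMGraph m n V}
    (hM : CMChromAtMost M k) : ∃ (H : CMGraph m n (Fin k)) (φ : V → Fin k), IsCMHom M H φ := by
  obtain ⟨W, _, H, f, hcard, hf⟩ := hM
  obtain ⟨ι⟩ := Embedding.nonempty_of_card_le (hcard.trans_eq (Fintype.card_fin k).symm)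
  cases isEmpty_or_nonempty W
  · exact ⟨⟨fun _ _ => none, fun _ _ => rfl, fun _ => rfl⟩, fun v => isEmptyElim (f v),
      fun u => isEmptyElim (f u)⟩
  · refine ⟨H.comap (invFun ι), ι ∘ f, fun u v l hl => ?_⟩
    simpa [CMGraph.comap, leftInverse_invFun ι.injective _] using hf u v l hl

namespace SimpleGraph

variable {α β γ : Type*} [LinearOrder γ]

/-- A vertex of minimal rank on a cycle would have two distinct higher-ranked neighbours on it. -/
theorem isAcyclic_of_subsingleton_upper {H : SimpleGraph α} (r : α → γ) (hr : Injective r)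
    (hup : ∀ x, {y | H.Adj x y ∧ r x < r y}.Subsingleton) : H.IsAcyclic := by
  classical
  intro v c hc
  obtain ⟨x, hx, hmin⟩ := c.support.toFinset.exists_min_image r ⟨v, by simp⟩
  rw [List.mem_toFinset] at hx
  have hc' := hc.rotate hx
  have upper : ∀ y ∈ (c.rotate x hx).support, H.Adj x y → r x < r y := fun y hy hxy =>
    (hmin y (by simpa using hy)).lt_of_ne (hr.ne hxy.ne)
  refine hc'.snd_ne_penultimate (hup x ⟨?_, upper _ (Walk.getVert_mem_support _ _) ?_⟩
    ⟨?_, upper _ (Walk.getVert_mem_support _ _) ?_⟩) <;>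
  first
  | exact Walk.adj_snd hc'.not_nil
  | exact (Walk.adj_penultimate hc'.not_nil).symm

theorem isAcyclic_induce_of_injOn_upper {G : SimpleGraph α} (c : α → β)
    (hc : ∀ u v, G.Adj u v → c u ≠ c v) (r : α → γ) (hr : Injective r)
    (hup : ∀ x, Set.InjOn c {y | G.Adj x y ∧ r x < r y}) (i j : β) :
    (G.induce {v | c v = i ∨ c v = j}).IsAcyclic := by
  refine isAcyclic_of_subsingleton_upper (r ∘ Subtype.val) (hr.comp Subtype.val_injective)
    fun x y₁ hy₁ y₂ hy₂ => Subtype.ext (hup x hy₁ hy₂ ?_)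
  have h₁ := hc _ _ hy₁.1
  have h₂ := hc _ _ hy₂.1
  rcases x.2 with hx | hx <;> rcases y₁.2 with hy₁ | hy₁ <;> rcases y₂.2 with hy₂ | hy₂ <;>
    simp_all

end SimpleGraph

theorem acycChromAtMost_of_injOn_upper {V β : Type} [Fintype β] {G : SimpleGraph V} {K : ℕ}
    (c : V → β) (hK : Fintype.card β ≤ K) (hc : ∀ u v, G.Adj u v → c u ≠ c v) (r : V → ℕ)
    (hr : Injective r) (hup : ∀ x, Set.InjOn c {y | G.Adj x y ∧ r x < r y}) :
    AcycChromAtMost G K := by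
  obtain ⟨ι⟩ := Embedding.nonempty_of_card_le (hK.trans_eq (Fintype.card_fin K).symm)
  exact ⟨ι ∘ c, fun u v huv => ι.injective.ne (hc u v huv),
    G.isAcyclic_induce_of_injOn_upper _ (fun u v huv => ι.injective.ne (hc u v huv)) r hr
      fun x _ hy₁ _ hy₂ h => hup x hy₁ hy₂ (ι.injective h)⟩

theorem two_mul_card_lt_pairs_le (α : Type*) [Fintype α] [LinearOrder α] :
    2 * Fintype.card {q : α × α // q.1 < q.2} ≤ Fintype.card α ^ 2 := by
  have hinj : Injective (Sum.elim (fun q : {q : α × α // q.1 < q.2} => q.1)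
      fun q : {q : α × α // q.1 < q.2} => q.1.swap) := by
    rintro (⟨q, hq⟩ | ⟨q, hq⟩) (⟨q', hq'⟩ | ⟨q', hq'⟩) h <;>
      simp_all [Prod.ext_iff] <;> exact lt_asymm hq (by rwa [h.1, h.2])
  simpa [two_mul, sq] using Fintype.card_le_of_injective _ hinj

def MixedColorable (m n : ℕ) {V : Type} (G : SimpleGraph V) (k : ℕ) : Prop :=
  ∀ M : CMGraph m n V, M.underlying = G → ∃ (H : CMGraph m n (Fin k)) (φ : V → Fin k), IsCMHom M H φ

section Counting

variable {m n k : ℕ} {V : Type} {G : SimpleGraph V} [DecidableRel G.Adj]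

theorem sum_card_adj_eq_two_mul_card_upper {r : V → ℕ} (hr : Injective r) (s : Finset V) :
    ∑ v ∈ s, #{w ∈ s | G.Adj v w} = 2 * #{q ∈ s ×ˢ s | G.Adj q.1 q.2 ∧ r q.1 < r q.2} := by
  have split : ∀ v w, (if G.Adj v w then 1 else 0) =
      (if G.Adj v w ∧ r v < r w then 1 else 0) + (if G.Adj w v ∧ r w < r v then 1 else 0) := by
    intro v w
    by_cases h : G.Adj v w
    · rcases (hr.ne h.ne).lt_or_gt with hvw | hvw <;> simp [h, h.symm, hvw, hvw.not_gt]
    · simp [h, G.adj_comm w v]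
  simp only [card_filter, sum_product, split, sum_add_distrib]
  rw [sum_comm (f := fun v w => if G.Adj w v ∧ r w < r v then 1 else 0)]
  ring

theorem pow_card_upperPairs_le [Nonempty (Link m n)] (hG : MixedColorable m n G k) {r : V → ℕ}
    (hr : Injective r) (s : Finset V) :
    Fintype.card (Link m n) ^ #{q ∈ s ×ˢ s | G.Adj q.1 q.2 ∧ r q.1 < r q.2} ≤
      Fintype.card (Link m n) ^ Fintype.card {q : Fin k × Fin k // q.1 < q.2} * k ^ #s := by
  classical
  set E := {q ∈ s ×ˢ s | G.Adj q.1 q.2 ∧ r q.1 < r q.2}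
  let l₀ : Link m n := Classical.arbitrary _
  have realize : ∀ lab : E → Link m n, ∃ (H : CMGraph m n (Fin k)) (φ : V → Fin k),
      ∀ e : E, H.link (φ e.1.1) (φ e.1.2) = some (lab e) := by
    intro lab
    obtain ⟨H, φ, hφ⟩ := hG
      (CMGraph.orient G r fun u v => if h : (u, v) ∈ E then lab ⟨_, h⟩ else l₀)
      (CMGraph.orient_underlying hr)
    refine ⟨H, φ, fun ⟨(u, v), he⟩ => ?_⟩
    have hadj := (mem_filter.mp he).2
    simpa [he] using hφ u v _ (CMGraph.orient_link_of_lt hadj.1 hadj.2)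
  choose H φ hHφ using realize
  have hinj : Injective fun lab => ((H lab).upperCode l₀, fun x : s => φ lab x) := by
    intro lab₁ lab₂ heq
    simp only [Prod.mk.injEq] at heq
    funext e
    have hs := mem_product.mp (mem_filter.mp e.2).1
    have hφ₁ : φ lab₁ e.1.1 = φ lab₂ e.1.1 := congrFun heq.2 ⟨_, hs.1⟩
    have hφ₂ : φ lab₁ e.1.2 = φ lab₂ e.1.2 := congrFun heq.2 ⟨_, hs.2⟩
    exact CMGraph.eq_of_upperCode_eq heq.1 (hHφ lab₁ e) (by rw [hφ₁, hφ₂]; exact hHφ lab₂ e)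
  simpa [Fintype.card_fun, Fintype.card_prod] using Fintype.card_le_of_injective _ hinj

theorem exists_sparse_vertex [Fintype V] (hG : MixedColorable m n G k)
    (hp : 2 ≤ Fintype.card (Link m n))
    {D : ℕ} (hD : k ^ 2 ≤ Fintype.card (Link m n) ^ D) (s : Finset V) (hs : k ^ 2 < #s) :
    ∃ v ∈ s, #{w ∈ s | G.Adj v w} ≤ D := by
  set p := Fintype.card (Link m n)
  have : Nonempty (Link m n) := Fintype.card_pos_iff.mp (by omega)
  obtain ⟨r, hr⟩ : ∃ r : V → ℕ, Injective r :=
    ⟨_, Fin.val_injective.comp (Fintype.equivFin V).injective⟩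
  set E := {q ∈ s ×ˢ s | G.Adj q.1 q.2 ∧ r q.1 < r q.2}
  set C := Fintype.card {q : Fin k × Fin k // q.1 < q.2}
  by_contra! hdense
  have hE : (D + 1) * #s ≤ 2 * #E := by
    rw [← sum_card_adj_eq_two_mul_card_upper hr, mul_comm, ← smul_eq_mul]
    exact card_nsmul_le_sum _ _ _ hdense
  have hcount : 2 * #E ≤ 2 * C + D * #s := by
    rw [← Nat.pow_le_pow_iff_right (show 1 < p by omega)]
    calc p ^ (2 * #E) = (p ^ #E) ^ 2 := by ring
      _ ≤ (p ^ C * k ^ #s) ^ 2 := by gcongr; exact pow_card_upperPairs_le hG hr s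
      _ = p ^ (2 * C) * (k ^ 2) ^ #s := by ring
      _ ≤ p ^ (2 * C) * (p ^ D) ^ #s := by gcongr
      _ = p ^ (2 * C + D * #s) := by ring
  have hC := two_mul_card_lt_pairs_le (Fin k)
  rw [Fintype.card_fin] at hC
  nlinarith

end Counting

section Ordering

variable {V : Type} [Fintype V] [DecidableEq V] {G : SimpleGraph V} [DecidableRel G.Adj] {c D : ℕ}

theorem exists_sparse_rank_on (hdeg : ∀ s : Finset V, c < #s → ∃ v ∈ s, #{w ∈ s | G.Adj v w} ≤ D)
    (s : Finset V) :
    ∃ (r : V → ℕ) (T : Finset V), Injective r ∧ T ⊆ s ∧ #T ≤ c ∧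
      (∀ v ∈ s, ∀ w ∈ s, r v < r w → v ∈ T → w ∈ T) ∧
      ∀ v ∈ s \ T, #{w ∈ s | G.Adj v w ∧ r v < r w} ≤ D := by
  induction s using Finset.strongInduction with | H s ih => ?_
  by_cases hs : #s ≤ c
  · exact ⟨_, s, Fin.val_injective.comp (Fintype.equivFin V).injective, subset_rfl, hs,
      fun _ _ _ hw _ _ => hw, by simp⟩
  obtain ⟨v, hv, hvD⟩ := hdeg s (not_le.mp hs)
  obtain ⟨r, T, hr, hTs, hT, hTup, hsparse⟩ := ih _ (erase_ssubset hv)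
  have hvT : v ∉ T := fun h => by simpa using hTs h
  refine ⟨fun w => if w = v then 0 else r w + 1, T, ?_, hTs.trans (erase_subset _ _), hT, ?_, ?_⟩
  · intro a b hab
    by_cases ha : a = v <;> by_cases hb : b = v <;> simp_all [hr.eq_iff]
  · intro a ha b hb hab haT
    have hav : a ≠ v := ne_of_mem_of_not_mem haT hvT
    have hbv : b ≠ v := by rintro rfl; simp [hav] at hab
    exact hTup a (mem_erase.mpr ⟨hav, ha⟩) b (mem_erase.mpr ⟨hbv, hb⟩)
      (by simpa [hav, hbv] using hab) haT
  · intro a ha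
    rcases eq_or_ne a v with rfl | hav
    · exact (card_le_card fun w hw => by simp_all).trans hvD
    · refine (card_le_card fun w hw => ?_).trans (hsparse a (by simp_all))
      have hwv : w ≠ v := by rintro rfl; simp [hav] at hw
      simp_all

theorem exists_sparse_rank (hdeg : ∀ s : Finset V, c < #s → ∃ v ∈ s, #{w ∈ s | G.Adj v w} ≤ D) :
    ∃ (r : V → ℕ) (T : Finset V), Injective r ∧ #T ≤ c ∧ (∀ v w, r v < r w → v ∈ T → w ∈ T) ∧
      ∀ v ∉ T, #{w | G.Adj v w ∧ r v < r w} ≤ D := by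
  obtain ⟨r, T, hr, -, hT, hTup, hsparse⟩ := exists_sparse_rank_on hdeg univ
  exact ⟨r, T, hr, hT, fun v w => hTup v (mem_univ _) w (mem_univ _),
    fun v hv => hsparse v (by simpa using hv)⟩

end Ordering

theorem acycChromAtMost_of_sparse_rank {m n k : ℕ} {V : Type} [Fintype V] {G : SimpleGraph V}
    [DecidableRel G.Adj] [Nonempty (Link m n)] (hG : MixedColorable m n G k) {R c : ℕ} (hR : 0 < R)
    {r : V → ℕ} (hr : Injective r) {T : Finset V} (hT : #T ≤ c)
    (hTup : ∀ v w, r v < r w → v ∈ T → w ∈ T)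
    (hsparse : ∀ v ∉ T, #{w | G.Adj v w ∧ r v < r w} ≤ Fintype.card (Link m n) ^ R) :
    AcycChromAtMost G (c + k ^ R) := by
  classical
  have hcode : ∀ v, ∃ code : V → Fin R → Link m n,
      v ∉ T → Set.InjOn code {w | G.Adj v w ∧ r v < r w} := by
    intro v
    by_cases hv : v ∈ T
    · exact ⟨fun _ _ => Classical.arbitrary _, fun h => (h hv).elim⟩
    · have hcard : Fintype.card ({w | G.Adj v w ∧ r v < r w} : Finset V) ≤
          Fintype.card (Fin R → Link m n) := by
        rw [Fintype.card_coe]; simpa using hsparse v hv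
      obtain ⟨code, hcode⟩ := Set.exists_injOn_iff_injective.mpr
        ⟨_, (Embedding.nonempty_of_card_le hcard).some.injective⟩
      exact ⟨code, fun _ => by simpa using hcode⟩
  choose code hcode using hcode
  let M : Fin R → CMGraph m n V := fun l => CMGraph.orient G r fun u w => code u w l
  have hM : ∀ l, (M l).underlying = G := fun l => CMGraph.orient_underlying hr
  choose H φ hφ using fun l => hG (M l) (hM l)
  let col : V → T ⊕ (Fin R → Fin k) := fun v =>
    if hv : v ∈ T then .inl ⟨v, hv⟩ else .inr fun l => φ l v
  refine acycChromAtMost_of_injOn_upper col ?_ ?_ r hr ?_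
  · simpa using hT
  · intro u v huv hcol
    by_cases hu : u ∈ T <;> by_cases hv : v ∈ T <;> simp [col, hu, hv] at hcol
    · exact huv.ne hcol
    · exact (hφ ⟨0, hR⟩).ne_of_adj (by rwa [hM]) (congrFun hcol _)
  · intro x w₁ hw₁ w₂ hw₂ hcol
    by_cases h₁ : w₁ ∈ T <;> by_cases h₂ : w₂ ∈ T <;> simp [col, h₁, h₂] at hcol
    · exact hcol
    · have hx : x ∉ T := fun hx => h₁ (hTup _ _ hw₁.2 hx)
      refine hcode x hx hw₁ hw₂ (funext fun l => Option.some_injective _ ?_)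
      rw [← hφ l x w₁ _ (CMGraph.orient_link_of_lt hw₁.1 hw₁.2),
        ← hφ l x w₂ _ (CMGraph.orient_link_of_lt hw₂.1 hw₂.2), congrFun hcol l]

theorem exists_ceil_logb_logb_eq {p k : ℕ} (hp : 1 < p) (hk : 2 ≤ k) :
    ∃ c : ℕ, ⌈Real.logb p (Real.logb p k)⌉ = c ∧ k ≤ p ^ p ^ c := by
  have hp' : (1 : ℝ) < p := by exact_mod_cast hp
  have ht : 0 < Real.logb p k := Real.logb_pos hp' (by exact_mod_cast hk)
  have hpk : (p : ℝ) ^ (1 : ℝ) < (k : ℝ) ^ p := by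
    rw [Real.rpow_one]
    exact_mod_cast Nat.lt_two_pow_self.trans_le (Nat.pow_le_pow_left hk p)
  -- `⌈log_p log_p k⌉ ≥ 0` because `log_p k > 1/p`, i.e. `k^p > p`.
  have hlarge : (p : ℝ)⁻¹ < Real.logb p k := by
    rw [inv_lt_iff_one_lt_mul₀' (by positivity), ← Real.logb_pow]
    exact (Real.lt_logb_iff_rpow_lt hp' (by positivity)).mpr hpk
  have hnonneg : 0 ≤ ⌈Real.logb p (Real.logb p k)⌉ := by
    have : ((-1 : ℤ) : ℝ) < Real.logb p (Real.logb p k) := by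
      rwa [Real.lt_logb_iff_rpow_lt hp' ht, Int.cast_neg, Int.cast_one, Real.rpow_neg_one]
    have := Int.lt_ceil.mpr this
    omega
  obtain ⟨c, hc⟩ : ∃ c : ℕ, ⌈Real.logb p (Real.logb p k)⌉ = c :=
    ⟨_, (Int.toNat_of_nonneg hnonneg).symm⟩
  refine ⟨c, hc, ?_⟩
  have hle := Int.le_ceil (Real.logb p (Real.logb p k))
  rw [hc, Int.cast_natCast, Real.logb_le_iff_le_rpow hp' ht, Real.rpow_natCast,
    Real.logb_le_iff_le_rpow hp' (by positivity)] at hle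
  exact_mod_cast hle

/-- If every `(m,n)`-colored mixed graph with underlying graph `G`
admits a homomorphism to some `(m,n)`-colored mixed graph on at most `k` vertices
(`k ≥ 4`, `p = 2m+n ≥ 2`), then `χ_a(G) ≤ k² + k^(2 + ⌈log_p log_p k⌉)`. -/
theorem acyclic_le_of_mixed_chromatic (m n k : ℕ)
    (hp : 2 ≤ 2 * m + n) (hk : 4 ≤ k)
    (V : Type) [Fintype V] (G : SimpleGraph V)
    (h : ∀ M : CMGraph m n V, M.underlying = G → CMChromAtMost M k) :
    (acycChrom G : ℝ) ≤
      (k : ℝ) ^ 2 +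
        (k : ℝ) ^ ((2 + ⌈Real.logb (2 * m + n : ℝ) (Real.logb (2 * m + n : ℝ) (k : ℝ))⌉ : ℤ)) := by
  classical
  set p := 2 * m + n
  have hG : MixedColorable m n G k := fun M hM => (h M hM).exists_hom_fin
  have hcard : Fintype.card (Link m n) = p := Link.card_eq
  have : Nonempty (Link m n) := Fintype.card_pos_iff.mp (by omega)
  obtain ⟨c, hc, hkc⟩ := exists_ceil_logb_logb_eq (p := p) (by omega) (by omega : 2 ≤ k)
  have hD : k ^ 2 ≤ p ^ p ^ (c + 2) := calc
    k ^ 2 ≤ (p ^ p ^ c) ^ 2 := by gcongr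
    _ = p ^ (p ^ c * 2) := by ring
    _ ≤ p ^ (p ^ c * p ^ 2) := by gcongr <;> nlinarith
    _ = p ^ p ^ (c + 2) := by ring
  obtain ⟨r, T, hr, hT, hTup, hsparse⟩ :=
    exists_sparse_rank (exists_sparse_vertex hG (by omega) (hcard ▸ hD))
  have hacyc : AcycChromAtMost G (k ^ 2 + k ^ (c + 2)) :=
    acycChromAtMost_of_sparse_rank hG (by omega) hr hT hTup (hcard ▸ hsparse)
  have hbase : (2 * m + n : ℝ) = (p : ℝ) := by push_cast [p]; ring
  rw [hbase, hc, show (2 + c : ℤ) = ((c + 2 : ℕ) : ℤ) by push_cast; ring, zpow_natCast]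
  exact_mod_cast Nat.sInf_le hacyc
end

section
/- Let m, n ≥ 0 be integers with (m,n) ≠ (0,1) (so p = 2m+n ≥ 2) and let t ≥ 1 be an integer. Let S be the simple graph obtained from the complete graph K_t by subdividing every edge exactly once. Then S has arboricity at most 2, and there exists an (m,n)-colored mixed graph with underlying graph S whose (m,n)-colored mixed chromatic number is at least t. Consequently, the (m,n)-colored mixed chromatic number is not bounded by any function of arboricity. -/
/-- Vertices of the full subdivision of the complete graph `K_t`: the `t` original
vertices together with one vertex for every (unordered) pair of distinct originals. -/
abbrev SubdivVert (t : ℕ) : Type := Fin t ⊕ {e : Sym2 (Fin t) // ¬ e.IsDiag}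

/-- The graph obtained from `K_t` by subdividing every edge exactly once. -/
def subdividedComplete (t : ℕ) : SimpleGraph (SubdivVert t) where
  Adj a b :=
    match a, b with
    | Sum.inl i, Sum.inr e => i ∈ e.val
    | Sum.inr e, Sum.inl i => i ∈ e.val
    | _, _ => False
  symm := by
    constructor
    rintro (i | e) (j | f) h
    · exact h.elim
    · exact h
    · exact h
    · exact h.elim
  loopless := by
    constructor
    rintro (i | e) h
    · exact h
    · exact h

/-!
Every subdivision vertex of `K_t` has exactly two neighbours, the smaller and the larger endpoint
of its edge; joining each subdivision vertex to only one of them yields two star forests that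
partition the edges. For the colouring, give the link from the smaller endpoint to a subdivision
vertex one type and the link from the larger endpoint another. Two original vertices share a
subdivision vertex, so a homomorphism identifying them would need two different links between
the same pair of image vertices; hence every homomorphism is injective on the `t` originals.
-/

theorem Sym2.mem_iff_eq_inf_or_eq_sup {α : Type*} [LinearOrder α] {a : α} {s : Sym2 α} :
    a ∈ s ↔ a = s.inf ∨ a = s.sup := by
  induction s using Sym2.ind with
  | _ x y =>
    rcases le_total x y with h | h <;> simp [h, or_comm]

theorem Sym2.inf_ne_sup_of_not_isDiag {α : Type*} [LinearOrder α] {s : Sym2 α}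
    (hs : ¬ s.IsDiag) : s.inf ≠ s.sup := by
  induction s using Sym2.ind with
  | _ x y =>
    rw [Sym2.mk_isDiag_iff] at hs
    rcases lt_or_gt_of_ne hs with h | h <;> simp [h.le, h.ne]

section Bipartite

variable {α β : Type}

def bipartiteGraph (r : α → β → Prop) : SimpleGraph (α ⊕ β) where
  Adj x y :=
    match x, y with
    | .inl a, .inr b => r a b
    | .inr b, .inl a => r a b
    | _, _ => False
  symm := ⟨by rintro (a | b) (a' | b') h <;> exact h⟩
  loopless := ⟨by rintro (a | b) h <;> exact h⟩

variable {r s : α → β → Prop}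

@[simp] theorem bipartiteGraph_adj_inl_inr {a : α} {b : β} :
    (bipartiteGraph r).Adj (.inl a) (.inr b) ↔ r a b := .rfl

@[simp] theorem bipartiteGraph_adj_inr_inl {a : α} {b : β} :
    (bipartiteGraph r).Adj (.inr b) (.inl a) ↔ r a b := .rfl

@[simp] theorem bipartiteGraph_not_adj_inl_inl {a a' : α} :
    ¬ (bipartiteGraph r).Adj (.inl a) (.inl a') := id

@[simp] theorem bipartiteGraph_not_adj_inr_inr {b b' : β} :
    ¬ (bipartiteGraph r).Adj (.inr b) (.inr b') := id

theorem bipartiteGraph_mono (h : ∀ a b, r a b → s a b) :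
    bipartiteGraph r ≤ bipartiteGraph s := by
  rintro (a | b) (a' | b') hadj
  exacts [hadj.elim, h _ _ hadj, h _ _ hadj, hadj.elim]

/-- Deleting the only edge at `b` isolates `b`. -/
theorem bipartiteGraph_isBridge (hr : ∀ b, {a | r a b}.Subsingleton) {a : α} {b : β}
    (hab : r a b) : (bipartiteGraph r).IsBridge s(.inr b, .inl a) := by
  rintro ⟨_ | @⟨_, a' | b', _, hadj, -⟩⟩
  · obtain ⟨hadj, hne⟩ := SimpleGraph.deleteEdges_adj.mp hadj
    obtain rfl : a' = a := hr b hadj hab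
    exact hne rfl
  · exact bipartiteGraph_not_adj_inr_inr (SimpleGraph.deleteEdges_adj.mp hadj).1

theorem isAcyclic_bipartiteGraph (hr : ∀ b, {a | r a b}.Subsingleton) :
    (bipartiteGraph r).IsAcyclic := by
  rw [SimpleGraph.isAcyclic_iff_forall_adj_isBridge]
  rintro (a | b) (a' | b') hadj
  · exact hadj.elim
  · rw [Sym2.eq_swap]
    exact bipartiteGraph_isBridge hr hadj
  · exact bipartiteGraph_isBridge hr hadj
  · exact hadj.elim

/-- The two forests are the stars `a = g₁ b` and `a = g₂ b`. -/
theorem arbAtMost_two_bipartiteGraph (g₁ g₂ : β → α) (hne : ∀ b, g₁ b ≠ g₂ b)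
    (hr : ∀ a b, r a b ↔ a = g₁ b ∨ a = g₂ b) : ArbAtMost (bipartiteGraph r) 2 := by
  refine ⟨![bipartiteGraph fun a b => a = g₁ b, bipartiteGraph fun a b => a = g₂ b],
    ?_, ?_, ?_, ?_⟩
  · refine Fin.forall_fin_two.mpr ⟨bipartiteGraph_mono ?_, bipartiteGraph_mono ?_⟩ <;>
      simp +contextual [hr]
  · refine Fin.forall_fin_two.mpr ⟨isAcyclic_bipartiteGraph ?_, isAcyclic_bipartiteGraph ?_⟩ <;>
      exact fun b a ha a' ha' => ha.trans ha'.symm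
  · rintro (a | b) (a' | b') hadj
    · exact hadj.elim
    · rcases (hr a b').mp hadj with h | h
      exacts [⟨0, h⟩, ⟨1, h⟩]
    · rcases (hr a' b).mp hadj with h | h
      exacts [⟨0, h⟩, ⟨1, h⟩]
    · exact hadj.elim
  · have hdisj : ∀ u v, ¬ ((bipartiteGraph fun a b => a = g₁ b).Adj u v ∧
        (bipartiteGraph fun a b => a = g₂ b).Adj u v) := by
      rintro (a | b) (a' | b') ⟨h₁, h₂⟩
      exacts [h₁.elim, hne _ (Eq.trans (Eq.symm h₁) h₂), hne _ (Eq.trans (Eq.symm h₁) h₂),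
        h₁.elim]
    simp only [Fin.forall_fin_two]
    simpa [and_comm] using hdisj

end Bipartite

theorem subdividedComplete_eq_bipartiteGraph (t : ℕ) :
    subdividedComplete t =
      bipartiteGraph fun i (e : {e : Sym2 (Fin t) // ¬ e.IsDiag}) => i ∈ e.val := by
  ext (i | e) (j | f) <;> rfl

theorem arbAtMost_two_subdividedComplete (t : ℕ) : ArbAtMost (subdividedComplete t) 2 := by
  rw [subdividedComplete_eq_bipartiteGraph]
  exact arbAtMost_two_bipartiteGraph (fun e => e.val.inf) (fun e => e.val.sup)
    (fun e => Sym2.inf_ne_sup_of_not_isDiag e.prop) fun _ _ => Sym2.mem_iff_eq_inf_or_eq_sup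

theorem Link.flip_flip_s13 {m n : ℕ} (l : Link m n) : l.flip.flip = l := by
  cases l <;> rfl

theorem Link.nontrivial {m n : ℕ} (h : 2 ≤ 2 * m + n) : Nontrivial (Link m n) := by
  rcases Nat.eq_zero_or_pos m with rfl | hm
  · exact ⟨.edge ⟨0, by omega⟩, .edge ⟨1, by omega⟩, by simp⟩
  · exact ⟨.arcOut ⟨0, hm⟩, .arcIn ⟨0, hm⟩, by simp⟩

namespace CMGraph

variable {m n : ℕ} {α β V : Type}

def ofBipartite (ℓ : α → β → Option (Link m n)) : CMGraph m n (α ⊕ β) where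
  link x y :=
    match x, y with
    | .inl a, .inr b => ℓ a b
    | .inr b, .inl a => (ℓ a b).map Link.flip
    | _, _ => none
  symm := by
    rintro (a | b) (a' | b')
    · rfl
    · rfl
    · simp [Option.map_map, Function.comp_def, Link.flip_flip_s13]
    · rfl
  loopless := by rintro (a | b) <;> rfl

@[simp] theorem ofBipartite_link_inl_inr (ℓ : α → β → Option (Link m n)) (a : α) (b : β) :
    (ofBipartite ℓ).link (.inl a) (.inr b) = ℓ a b := rfl

theorem underlying_ofBipartite (ℓ : α → β → Option (Link m n)) :
    (ofBipartite ℓ).underlying = bipartiteGraph fun a b => (ℓ a b).isSome := by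
  ext (a | b) (a' | b') <;> simp [underlying, ofBipartite]

theorem _root_.IsCMHom.ne_of_link_ne {W : Type} {G : CMGraph m n V} {H : CMGraph m n W}
    {f : V → W} (hf : IsCMHom G H f) {u v w : V} {L₁ L₂ : Link m n}
    (hu : G.link u w = some L₁) (hv : G.link v w = some L₂) (hL : L₁ ≠ L₂) : f u ≠ f v := by
  intro huv
  have h₁ := hf _ _ _ hu
  rw [huv, hf _ _ _ hv, Option.some_inj] at h₁
  exact hL h₁.symm

theorem cmChromAtLeast_of_separated {G : CMGraph m n V} {k : ℕ} (s : Fin k → V)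
    (hs : ∀ i j, i < j →
      ∃ w L₁ L₂, G.link (s i) w = some L₁ ∧ G.link (s j) w = some L₂ ∧ L₁ ≠ L₂) :
    CMChromAtLeast G k := by
  intro W _ H f hf
  have hinj : Function.Injective (f ∘ s) := by
    intro i j hij
    by_contra hne
    rcases lt_or_gt_of_ne hne with h | h
    · obtain ⟨w, L₁, L₂, h₁, h₂, hL⟩ := hs i j h
      exact hf.ne_of_link_ne h₁ h₂ hL hij
    · obtain ⟨w, L₁, L₂, h₁, h₂, hL⟩ := hs j i h
      exact hf.ne_of_link_ne h₁ h₂ hL hij.symm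
  simpa using Fintype.card_le_of_injective _ hinj

end CMGraph

def subdividedCompleteMixed {m n : ℕ} (L₁ L₂ : Link m n) (t : ℕ) : CMGraph m n (SubdivVert t) :=
  CMGraph.ofBipartite fun i e =>
    if i = e.val.inf then some L₁ else if i = e.val.sup then some L₂ else none

theorem underlying_subdividedCompleteMixed {m n : ℕ} (L₁ L₂ : Link m n) (t : ℕ) :
    (subdividedCompleteMixed L₁ L₂ t).underlying = subdividedComplete t := by
  rw [subdividedCompleteMixed, CMGraph.underlying_ofBipartite,
    subdividedComplete_eq_bipartiteGraph]
  congr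
  ext i e
  rw [Sym2.mem_iff_eq_inf_or_eq_sup]
  split_ifs <;> simp_all

theorem cmChromAtLeast_subdividedCompleteMixed {m n : ℕ} {L₁ L₂ : Link m n} (hL : L₁ ≠ L₂)
    (t : ℕ) : CMChromAtLeast (subdividedCompleteMixed L₁ L₂ t) t :=
  CMGraph.cmChromAtLeast_of_separated .inl fun i j hij =>
    ⟨.inr ⟨s(i, j), by simpa using hij.ne⟩, L₁, L₂,
      by simp [subdividedCompleteMixed, hij.le],
      by simp [subdividedCompleteMixed, hij.le, hij.ne'], hL⟩

theorem subdivided_complete_arboricity_and_chromatic_general (m n t : ℕ)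
    (hp : 2 ≤ 2 * m + n) :
    ArbAtMost (subdividedComplete t) 2 ∧
    ∃ M : CMGraph m n (SubdivVert t),
      M.underlying = subdividedComplete t ∧ CMChromAtLeast M t := by
  have := Link.nontrivial hp
  obtain ⟨L₁, L₂, hL⟩ := exists_pair_ne (Link m n)
  exact ⟨arbAtMost_two_subdividedComplete t, subdividedCompleteMixed L₁ L₂ t,
    underlying_subdividedCompleteMixed L₁ L₂ t, cmChromAtLeast_subdividedCompleteMixed hL t⟩

/-- For `(m,n) ≠ (0,1)` (so `p = 2m+n ≥ 2`) and `t ≥ 1`, the full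
subdivision `S` of `K_t` has arboricity at most `2`, and there is an `(m,n)`-colored
mixed graph with underlying graph `S` whose `(m,n)`-colored mixed chromatic number is
at least `t`. -/
theorem subdivided_complete_arboricity_and_chromatic (m n t : ℕ)
    (hmn : (m, n) ≠ (0, 1)) (hp : 2 ≤ 2 * m + n) (ht : 1 ≤ t) :
    ArbAtMost (subdividedComplete t) 2 ∧
    ∃ M : CMGraph m n (SubdivVert t),
      M.underlying = subdividedComplete t ∧ CMChromAtLeast M t :=
  subdivided_complete_arboricity_and_chromatic_general m n t hp
end
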